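/- arXiv:1609.02094 — 3 statements merged into one kernel-verified Lean document; each statement's English description precedes it below -/
import Mathlib

section
/- For any set X of n points in ℝ^d (with n ≥ 2) and any ε ∈ (0, 1/2), there exist a positive integer m with m ≤ C·ε^{-2}·log n (for a universal constant C > 0) and a map f : X → ℝ^m such that for all x, y ∈ X, (1-ε)·‖x-y‖₂² ≤ ‖f(x)-f(y)‖₂² ≤ (1+ε)·‖x-y‖₂². -/
/-!
Map `x` to `m^{-1/2} (⟪x, ω j⟫)_{j < m}` where the rows `ω j` are independent standard Gaussian
vectors. For a unit vector `u` the quantity `∑ j, ⟪u, ω j⟫ ^ 2` is χ²-distributed with `m` degrees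
of freedom, with moment generating function `(1 - 2t)^{-m/2}`. Chernoff bounds at `t = ± ε/4`,
together with `log b ≥ 1 - 1/b`, bound each tail by `exp (-m ε² / 12)`. A union bound over the
`n²` differences `x - y` leaves positive probability of a good `ω` once `m ≥ 48 ε⁻² log n`.
-/

open MeasureTheory ProbabilityTheory Real
open scoped RealInnerProductSpace

lemma mgf_sq_gaussianReal {t : ℝ} (ht : t < 1 / 2) :
    mgf (fun x ↦ x ^ 2) (gaussianReal 0 1) t = (√(1 - 2 * t))⁻¹ := by
  have ht' : 0 < 1 - 2 * t := by linarith
  have hexp (x : ℝ) :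
      -(x - 0) ^ 2 / (2 * ((1 : NNReal) : ℝ)) + t * x ^ 2 = -(1 / 2 - t) * x ^ 2 := by
    push_cast; ring
  rw [mgf, integral_gaussianReal_eq_integral_smul one_ne_zero, gaussianPDFReal_def]
  simp_rw [smul_eq_mul, mul_assoc, ← exp_add, hexp, integral_const_mul, integral_gaussian]
  rw [show π / (1 / 2 - t) = 2 * π / (1 - 2 * t) by field_simp, sqrt_div' _ ht'.le,
    NNReal.coe_one, mul_one]
  field_simp

lemma inv_sqrt_le_exp {b : ℝ} (hb : 0 < b) : (√b)⁻¹ ≤ exp ((b⁻¹ - 1) / 2) := by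
  rw [sqrt_eq_rpow, rpow_def_of_pos hb, ← exp_neg]
  have := one_sub_inv_le_log_of_pos hb
  gcongr
  linarith

lemma exp_mul_inv_sqrt_pow_le {t a c : ℝ} (ht : t < 1 / 2)
    (h : -t * a + ((1 - 2 * t)⁻¹ - 1) / 2 ≤ -c) (m : ℕ) :
    exp (-t * (a * m)) * (√(1 - 2 * t))⁻¹ ^ m ≤ exp (-(m * c)) :=
  calc exp (-t * (a * m)) * (√(1 - 2 * t))⁻¹ ^ m
      = (exp (-t * a) * (√(1 - 2 * t))⁻¹) ^ m := by
        rw [mul_pow, ← exp_nat_mul]; ring_nf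
    _ ≤ (exp (-t * a) * exp (((1 - 2 * t)⁻¹ - 1) / 2)) ^ m := by
        gcongr; exact inv_sqrt_le_exp (by linarith)
    _ ≤ exp (-c) ^ m := by
        gcongr; rwa [← exp_add, exp_le_exp]
    _ = exp (-(m * c)) := by rw [← exp_nat_mul]; ring_nf

section ChiSquaredTail

variable {Ω : Type*} [MeasurableSpace Ω] {μ : Measure Ω} [IsProbabilityMeasure μ] {Q : Ω → ℝ}
  {m : ℕ} {ε : ℝ}

lemma measureReal_ge_le_of_mgf_eq (hQ : ∀ t < 1 / 2, mgf Q μ t = (√(1 - 2 * t))⁻¹ ^ m)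
    (hε₀ : 0 ≤ ε) (hε : ε ≤ 1 / 2) :
    μ.real {ω | (1 + ε) * m ≤ Q ω} ≤ exp (-(m * (ε ^ 2 / 12))) := by
  have ht : ε / 4 < 1 / 2 := by linarith
  have hint : Integrable (fun ω ↦ exp (ε / 4 * Q ω)) μ := by
    rw [← mgf_pos_iff, hQ _ ht]
    have : 0 < 1 - 2 * (ε / 4) := by linarith
    positivity
  refine (measure_ge_le_exp_mul_mgf _ (by positivity) hint).trans ?_
  rw [hQ _ ht]
  refine exp_mul_inv_sqrt_pow_le ht ?_ m
  rw [show 1 - 2 * (ε / 4) = (2 - ε) / 2 by ring, inv_div, ← sub_nonneg]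
  have : -(ε ^ 2 / 12) - (-(ε / 4) * (1 + ε) + (2 / (2 - ε) - 1) / 2) =
      ε ^ 2 * (1 - 2 * ε) / (12 * (2 - ε)) := by
    have : 2 - ε ≠ 0 := by linarith
    field_simp; ring
  rw [this]; apply div_nonneg <;> nlinarith

lemma measureReal_le_le_of_mgf_eq (hQ : ∀ t < 1 / 2, mgf Q μ t = (√(1 - 2 * t))⁻¹ ^ m)
    (hε₀ : 0 ≤ ε) :
    μ.real {ω | Q ω ≤ (1 - ε) * m} ≤ exp (-(m * (ε ^ 2 / 12))) := by
  have ht : -(ε / 4) < 1 / 2 := by linarith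
  have hint : Integrable (fun ω ↦ exp (-(ε / 4) * Q ω)) μ := by
    rw [← mgf_pos_iff, hQ _ ht]
    have : 0 < 1 - 2 * -(ε / 4) := by linarith
    positivity
  refine (measure_le_le_exp_mul_mgf _ (by linarith) hint).trans ?_
  rw [hQ _ ht]
  refine exp_mul_inv_sqrt_pow_le ht ?_ m
  rw [show 1 - 2 * -(ε / 4) = (2 + ε) / 2 by ring, inv_div, ← sub_nonneg]
  have : -(ε ^ 2 / 12) - (-(-(ε / 4)) * (1 - ε) + (2 / (2 + ε) - 1) / 2) =
      ε ^ 2 * (1 + 2 * ε) / (12 * (2 + ε)) := by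
    field_simp; ring
  rw [this]; positivity

lemma measureReal_notMem_Icc_le_of_mgf_eq
    (hQ : ∀ t < 1 / 2, mgf Q μ t = (√(1 - 2 * t))⁻¹ ^ m) (hε₀ : 0 ≤ ε) (hε : ε ≤ 1 / 2) :
    μ.real {ω | Q ω ∉ Set.Icc ((1 - ε) * m) ((1 + ε) * m)} ≤ 2 * exp (-(m * (ε ^ 2 / 12))) := by
  have hsub : {ω | Q ω ∉ Set.Icc ((1 - ε) * m) ((1 + ε) * m)} ⊆
      {ω | Q ω ≤ (1 - ε) * m} ∪ {ω | (1 + ε) * m ≤ Q ω} := by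
    intro ω hω
    simp only [Set.mem_ofPred_eq, Set.mem_Icc, not_and_or, not_le] at hω
    exact hω.imp le_of_lt le_of_lt
  calc _ ≤ μ.real ({ω | Q ω ≤ (1 - ε) * m} ∪ {ω | (1 + ε) * m ≤ Q ω}) := measureReal_mono hsub
    _ ≤ μ.real {ω | Q ω ≤ (1 - ε) * m} + μ.real {ω | (1 + ε) * m ≤ Q ω} :=
      measureReal_union_le _ _
    _ ≤ 2 * exp (-(m * (ε ^ 2 / 12))) := by
      linarith [measureReal_le_le_of_mgf_eq hQ hε₀, measureReal_ge_le_of_mgf_eq hQ hε₀ hε]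

end ChiSquaredTail

section RowProjection

variable {E : Type*} [NormedAddCommGroup E] [InnerProductSpace ℝ E] {ι : Type*} [Fintype ι]

-- Normalised by `√(card ι)` so that squared lengths are preserved in expectation.
noncomputable def rowProjection (ω : ι → E) (x : E) : EuclideanSpace ℝ ι :=
  (√(Fintype.card ι))⁻¹ • WithLp.toLp 2 fun j ↦ ⟪x, ω j⟫

lemma norm_rowProjection_sub_sq (ω : ι → E) (x y : E) :
    ‖rowProjection ω x - rowProjection ω y‖ ^ 2 = (∑ j, ⟪x - y, ω j⟫ ^ 2) / Fintype.card ι := by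
  have : rowProjection ω x - rowProjection ω y
      = (√(Fintype.card ι))⁻¹ • WithLp.toLp 2 fun j ↦ ⟪x - y, ω j⟫ := by
    ext j; simp [rowProjection, inner_sub_left, mul_sub]
  rw [this, norm_smul, mul_pow, EuclideanSpace.real_norm_sq_eq, norm_inv,
    norm_of_nonneg (sqrt_nonneg _), inv_pow, sq_sqrt (Nat.cast_nonneg _)]
  simp [div_eq_inv_mul]

end RowProjection

section GaussianRows

variable {E : Type*} [NormedAddCommGroup E] [InnerProductSpace ℝ E] [FiniteDimensional ℝ E]
  [MeasurableSpace E] [BorelSpace E] {ι : Type*} [Fintype ι]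

lemma map_inner_stdGaussian {u : E} (hu : ‖u‖ = 1) :
    (stdGaussian E).map (fun x ↦ ⟪u, x⟫) = gaussianReal 0 1 := by
  have h := IsGaussian.map_eq_gaussianReal (μ := stdGaussian E) (innerSL ℝ u)
  rw [integral_strongDual_stdGaussian, variance_dual_stdGaussian, innerSL_apply_norm, hu] at h
  simpa using h

lemma mgf_sq_inner_stdGaussian {u : E} (hu : ‖u‖ = 1) {t : ℝ} (ht : t < 1 / 2) :
    mgf (fun x ↦ ⟪u, x⟫ ^ 2) (stdGaussian E) t = (√(1 - 2 * t))⁻¹ := by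
  rw [← mgf_sq_gaussianReal ht, ← map_inner_stdGaussian hu, mgf_map (by fun_prop) (by fun_prop)]
  rfl

lemma mgf_sum_sq_inner_pi_stdGaussian {u : E} (hu : ‖u‖ = 1) {t : ℝ} (ht : t < 1 / 2) :
    mgf (fun ω : ι → E ↦ ∑ j, ⟪u, ω j⟫ ^ 2) (Measure.pi fun _ ↦ stdGaussian E) t
      = (√(1 - 2 * t))⁻¹ ^ Fintype.card ι := by
  have hindep := iIndepFun_pi (μ := fun _ : ι ↦ stdGaussian E) (X := fun _ x ↦ ⟪u, x⟫ ^ 2)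
    (fun _ ↦ by fun_prop)
  have hsum := hindep.mgf_sum (t := t) (fun _ ↦ by fun_prop) Finset.univ
  simp only [Finset.sum_fn] at hsum
  rw [hsum, Finset.prod_eq_pow_card fun j _ ↦ ?_, Finset.card_univ]
  calc mgf (fun ω ↦ ⟪u, ω j⟫ ^ 2) (Measure.pi fun _ ↦ stdGaussian E) t
      = mgf (fun x ↦ ⟪u, x⟫ ^ 2) ((Measure.pi fun _ ↦ stdGaussian E).map (Function.eval j)) t :=
        (mgf_map (X := fun x ↦ ⟪u, x⟫ ^ 2) (measurable_pi_apply j).aemeasurable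
          (by fun_prop)).symm
    _ = _ := by rw [(measurePreserving_eval _ j).map_eq, mgf_sq_inner_stdGaussian hu ht]

lemma measureReal_sum_sq_inner_notMem_Icc_le {ε : ℝ} (hε₀ : 0 ≤ ε) (hε : ε ≤ 1 / 2) (v : E) :
    (Measure.pi fun _ : ι ↦ stdGaussian E).real {ω | ∑ j, ⟪v, ω j⟫ ^ 2 ∉
      Set.Icc ((1 - ε) * Fintype.card ι * ‖v‖ ^ 2) ((1 + ε) * Fintype.card ι * ‖v‖ ^ 2)}
      ≤ 2 * exp (-(Fintype.card ι * (ε ^ 2 / 12))) := by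
  rcases eq_or_ne v 0 with rfl | hv
  · simpa using (exp_pos _).le
  have hu : ‖‖v‖⁻¹ • v‖ = 1 := norm_smul_inv_norm hv
  have hscale (ω : ι → E) : ∑ j, ⟪v, ω j⟫ ^ 2 = ‖v‖ ^ 2 * ∑ j, ⟪‖v‖⁻¹ • v, ω j⟫ ^ 2 := by
    have : ‖v‖ ≠ 0 := norm_ne_zero_iff.mpr hv
    simp_rw [real_inner_smul_left, mul_pow, ← Finset.mul_sum]
    field_simp
  have hpos : 0 < ‖v‖ ^ 2 := by positivity
  simp_rw [hscale, Set.mem_Icc, mul_comm _ (‖v‖ ^ 2), mul_le_mul_iff_right₀ hpos, ← Set.mem_Icc]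
  exact measureReal_notMem_Icc_le_of_mgf_eq (fun t ht ↦ mgf_sum_sq_inner_pi_stdGaussian hu ht)
    hε₀ hε

lemma exists_forall_sum_sq_inner_mem_Icc (X : Finset E) {ε : ℝ} (hε₀ : 0 ≤ ε) (hε : ε ≤ 1 / 2)
    (hX : 2 * X.card ^ 2 * exp (-(Fintype.card ι * (ε ^ 2 / 12))) < 1) :
    ∃ ω : ι → E, ∀ x ∈ X, ∀ y ∈ X, ∑ j, ⟪x - y, ω j⟫ ^ 2 ∈
      Set.Icc ((1 - ε) * Fintype.card ι * ‖x - y‖ ^ 2) ((1 + ε) * Fintype.card ι * ‖x - y‖ ^ 2) := by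
  set μ := Measure.pi fun _ : ι ↦ stdGaussian E
  set bad : E → Set (ι → E) := fun v ↦ {ω | ∑ j, ⟪v, ω j⟫ ^ 2 ∉
      Set.Icc ((1 - ε) * Fintype.card ι * ‖v‖ ^ 2) ((1 + ε) * Fintype.card ι * ‖v‖ ^ 2)}
  by_contra! h
  have hcover : Set.univ ⊆ ⋃ x ∈ X, ⋃ y ∈ X, bad (x - y) := fun ω _ ↦ by
    obtain ⟨x, hx, y, hy, hxy⟩ := h ω
    exact Set.mem_biUnion hx (Set.mem_biUnion hy hxy)
  have := calc (1 : ℝ) = μ.real Set.univ := probReal_univ.symm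
    _ ≤ μ.real (⋃ x ∈ X, ⋃ y ∈ X, bad (x - y)) := measureReal_mono hcover (measure_ne_top _ _)
    _ ≤ ∑ x ∈ X, ∑ y ∈ X, μ.real (bad (x - y)) :=
      (measureReal_biUnion_finset_le _ _).trans
        (Finset.sum_le_sum fun _ _ ↦ measureReal_biUnion_finset_le _ _)
    _ ≤ ∑ x ∈ X, ∑ y ∈ X, 2 * exp (-(Fintype.card ι * (ε ^ 2 / 12))) := by
      gcongr with x _ y _
      exact measureReal_sum_sq_inner_notMem_Icc_le hε₀ hε _
    _ = 2 * X.card ^ 2 * exp (-(Fintype.card ι * (ε ^ 2 / 12))) := by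
      simp only [Finset.sum_const, nsmul_eq_mul]; ring
  linarith

lemma exists_map_sq_norm_sub_approx (X : Finset E) [Nonempty ι] {ε : ℝ} (hε₀ : 0 ≤ ε)
    (hε : ε ≤ 1 / 2) (hX : 2 * X.card ^ 2 * exp (-(Fintype.card ι * (ε ^ 2 / 12))) < 1) :
    ∃ f : E → EuclideanSpace ℝ ι, ∀ x ∈ X, ∀ y ∈ X,
      (1 - ε) * ‖x - y‖ ^ 2 ≤ ‖f x - f y‖ ^ 2 ∧ ‖f x - f y‖ ^ 2 ≤ (1 + ε) * ‖x - y‖ ^ 2 := by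
  obtain ⟨ω, hω⟩ := exists_forall_sum_sq_inner_mem_Icc X hε₀ hε hX
  refine ⟨rowProjection ω, fun x hx y hy ↦ ?_⟩
  have hm : (0 : ℝ) < Fintype.card ι := by exact_mod_cast Fintype.card_pos
  obtain ⟨hlo, hhi⟩ := hω x hx y hy
  rw [norm_rowProjection_sub_sq, le_div_iff₀ hm, div_le_iff₀ hm]
  constructor <;> linarith

end GaussianRows

lemma two_mul_sq_mul_exp_neg_lt_one {n : ℕ} (hn : 2 ≤ n) {a : ℝ} (ha : 4 * log n ≤ a) :
    2 * (n : ℝ) ^ 2 * exp (-a) < 1 := by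
  have hn' : (2 : ℝ) ≤ n := by exact_mod_cast hn
  have hexp : exp (-a) ≤ ((n : ℝ) ^ 4)⁻¹ := by
    rw [← exp_log (by positivity : (0 : ℝ) < n ^ 4), ← exp_neg, exp_le_exp, log_pow]
    push_cast; linarith
  calc 2 * (n : ℝ) ^ 2 * exp (-a) ≤ 2 * (n : ℝ) ^ 2 * ((n : ℝ) ^ 4)⁻¹ := by gcongr
    _ = 2 / (n : ℝ) ^ 2 := by field_simp
    _ < 1 := by rw [div_lt_one (by positivity)]; nlinarith

/-- The Johnson–Lindenstrauss lemma: for any set `X` of `n ≥ 2` points in `ℝ^d` and any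
`ε ∈ (0, 1/2)`, there is a positive integer `m ≤ C · ε⁻² · log n` (for a universal constant
`C > 0`) and a map `f : X → ℝ^m` with `(1-ε)‖x-y‖² ≤ ‖f x - f y‖² ≤ (1+ε)‖x-y‖²` on `X`. -/
theorem jl_lemma :
    ∃ C : ℝ, 0 < C ∧
      ∀ (d n : ℕ) (X : Finset (EuclideanSpace ℝ (Fin d))), X.card = n → 2 ≤ n →
        ∀ ε : ℝ, 0 < ε → ε < 1 / 2 →
          ∃ m : ℕ, 0 < m ∧ (m : ℝ) ≤ C * ε⁻¹ ^ 2 * Real.log n ∧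
            ∃ f : EuclideanSpace ℝ (Fin d) → EuclideanSpace ℝ (Fin m),
              ∀ x ∈ X, ∀ y ∈ X,
                (1 - ε) * ‖x - y‖ ^ 2 ≤ ‖f x - f y‖ ^ 2 ∧
                  ‖f x - f y‖ ^ 2 ≤ (1 + ε) * ‖x - y‖ ^ 2 := by
  refine ⟨49, by norm_num, fun d n X hX hn ε hε hε' ↦ ?_⟩
  have hlog : log 2 ≤ log n := log_le_log two_pos (by exact_mod_cast hn)
  have hεinv : 2 ≤ ε⁻¹ := by rw [le_inv_comm₀ two_pos hε]; linarith
  have hone : 1 ≤ ε⁻¹ ^ 2 * log n := by nlinarith [log_two_gt_d9]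
  set m := ⌈48 * ε⁻¹ ^ 2 * log n⌉₊
  have hm : 48 * ε⁻¹ ^ 2 * log n ≤ m := Nat.le_ceil _
  have hm₀ : 0 < m := Nat.ceil_pos.2 (by linarith)
  have : Nonempty (Fin m) := Fin.pos_iff_nonempty.mp hm₀
  obtain ⟨f, hf⟩ := exists_map_sq_norm_sub_approx X hε.le hε'.le (ι := Fin m) <| by
    rw [Fintype.card_fin, hX]
    refine two_mul_sq_mul_exp_neg_lt_one hn ?_
    calc 4 * log n = 48 * ε⁻¹ ^ 2 * log n * (ε ^ 2 / 12) := by field_simp; ring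
      _ ≤ m * (ε ^ 2 / 12) := by gcongr
  refine ⟨m, hm₀, ?_, f, hf⟩
  linarith [Nat.ceil_lt_add_one (by linarith : 0 ≤ 48 * ε⁻¹ ^ 2 * log n)]
end

section
/- Let u, v ∈ ℝ^d, let 0 < ε < 1, and let a, b ∈ ℝ^m satisfy: (1-ε)‖u‖₂² ≤ ‖a‖₂² ≤ (1+ε)‖u‖₂², (1-ε)‖v‖₂² ≤ ‖b‖₂² ≤ (1+ε)‖v‖₂², and (1-ε)‖u-v‖₂² ≤ ‖a-b‖₂² ≤ (1+ε)‖u-v‖₂². Then |⟨a, b⟩ − ⟨u, v⟩| ≤ 2ε·(‖u‖₂² + ‖v‖₂²). -/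
open scoped RealInnerProductSpace

/-- If `a, b` preserve the squared norms of `u, v` and the squared distance `‖u - v‖²` up to
relative error `ε`, then the inner product is preserved up to additive error
`2ε(‖u‖² + ‖v‖²)`. -/
theorem inner_product_preserved (d m : ℕ) (u v : EuclideanSpace ℝ (Fin d))
    (ε : ℝ) (hε0 : 0 < ε) (hε1 : ε < 1)
    (a b : EuclideanSpace ℝ (Fin m))
    (ha1 : (1 - ε) * ‖u‖ ^ 2 ≤ ‖a‖ ^ 2) (ha2 : ‖a‖ ^ 2 ≤ (1 + ε) * ‖u‖ ^ 2)
    (hb1 : (1 - ε) * ‖v‖ ^ 2 ≤ ‖b‖ ^ 2) (hb2 : ‖b‖ ^ 2 ≤ (1 + ε) * ‖v‖ ^ 2)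
    (hab1 : (1 - ε) * ‖u - v‖ ^ 2 ≤ ‖a - b‖ ^ 2)
    (hab2 : ‖a - b‖ ^ 2 ≤ (1 + ε) * ‖u - v‖ ^ 2) :
    |⟪a, b⟫ - ⟪u, v⟫| ≤ 2 * ε * (‖u‖ ^ 2 + ‖v‖ ^ 2) := by
  have h1 : ‖a - b‖ ^ 2 = ‖a‖ ^ 2 - 2 * ⟪a, b⟫ + ‖b‖ ^ 2 := norm_sub_sq_real a b
  have h2 : ‖u - v‖ ^ 2 = ‖u‖ ^ 2 - 2 * ⟪u, v⟫ + ‖v‖ ^ 2 := norm_sub_sq_real u v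
  have h3 : ⟪u, v⟫ ≤ ‖u‖ * ‖v‖ := real_inner_le_norm u v
  have h4 : -(‖u‖ * ‖v‖) ≤ ⟪u, v⟫ := neg_abs_le _ |>.trans' (by
    have := abs_real_inner_le_norm u v; linarith)
  have h5 : 2 * ‖u‖ * ‖v‖ ≤ ‖u‖ ^ 2 + ‖v‖ ^ 2 := two_mul_le_add_sq ‖u‖ ‖v‖
  rw [abs_le]
  constructor <;> nlinarith [norm_nonneg u, norm_nonneg v, sq_nonneg (‖u‖ - ‖v‖)]
end

section
/- Let k be a positive integer, set ε = 1/(16√k), let d ≥ k, let S ⊆ {1,…,d} with |S| = k, and define y_S = (1/√k)·Σ_{j∈S} e_j ∈ ℝ^d, where e_1,…,e_d are the standard unit vectors. Let f be a map from {0, e_1, …, e_d, y_S} into ℝ^m with f(0) = 0 satisfying (1-ε)‖x-y‖₂² ≤ ‖f(x)-f(y)‖₂² ≤ (1+ε)‖x-y‖₂² for all x, y in {0, e_1, …, e_d, y_S}. Then for every j ∈ {1,…,d}: if j ∈ S then ⟨f(e_j), f(y_S)⟩ ≥ 12ε, and if j ∉ S then ⟨f(e_j), f(y_S)⟩ ≤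 4ε. -/
open scoped RealInnerProductSpace
open Finset

section Polarization

variable {E F : Type*} [NormedAddCommGroup E] [InnerProductSpace ℝ E]
  [NormedAddCommGroup F] [InnerProductSpace ℝ F]
  {P : Set E} {f : E → F} {ε : ℝ} {x y : E}

/-- Polarization: `2⟪x, y⟫ = ‖x‖² + ‖y‖² - ‖x - y‖²`, and `f` moves each of the three squared
norms by a factor of at most `1 ± ε` since it fixes the origin. -/
theorem abs_inner_map_sub_inner_le (hf0 : f 0 = 0)
    (hf : ∀ x ∈ P, ∀ y ∈ P,
      (1 - ε) * ‖x - y‖ ^ 2 ≤ ‖f x - f y‖ ^ 2 ∧ ‖f x - f y‖ ^ 2 ≤ (1 + ε) * ‖x - y‖ ^ 2)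
    (h0 : 0 ∈ P) (hx : x ∈ P) (hy : y ∈ P) :
    |⟪f x, f y⟫ - ⟪x, y⟫| ≤ ε / 2 * (‖x‖ ^ 2 + ‖y‖ ^ 2 + ‖x - y‖ ^ 2) := by
  have hfx := hf x hx 0 h0
  have hfy := hf y hy 0 h0
  have hfxy := hf x hx y hy
  simp only [hf0, sub_zero] at hfx hfy
  have hpol_f := norm_sub_sq_real (f x) (f y)
  have hpol := norm_sub_sq_real x y
  rw [abs_le]
  constructor <;> nlinarith [hfx.1, hfx.2, hfy.1, hfy.2, hfxy.1, hfxy.2]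

theorem abs_inner_map_sub_inner_le_of_norm_eq_one (hf0 : f 0 = 0)
    (hf : ∀ x ∈ P, ∀ y ∈ P,
      (1 - ε) * ‖x - y‖ ^ 2 ≤ ‖f x - f y‖ ^ 2 ∧ ‖f x - f y‖ ^ 2 ≤ (1 + ε) * ‖x - y‖ ^ 2)
    (h0 : 0 ∈ P) (hx : x ∈ P) (hy : y ∈ P) (hx1 : ‖x‖ = 1) (hy1 : ‖y‖ = 1) :
    |⟪f x, f y⟫ - ⟪x, y⟫| ≤ ε * (2 - ⟪x, y⟫) := by
  have h := abs_inner_map_sub_inner_le hf0 hf h0 hx hy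
  rwa [norm_sub_sq_real, hx1, hy1, show (1 : ℝ) ^ 2 + 1 ^ 2 + (1 ^ 2 - 2 * ⟪x, y⟫ + 1 ^ 2)
    = 2 * (2 - ⟪x, y⟫) by ring, ← mul_assoc, div_mul_cancel₀ _ two_ne_zero] at h

end Polarization

section IndicatorVector

variable {ι : Type*} [Fintype ι] [DecidableEq ι]

theorem EuclideanSpace.norm_sum_single_one (S : Finset ι) :
    ‖∑ j ∈ S, EuclideanSpace.single j (1 : ℝ)‖ = √(#S) := by
  simp [EuclideanSpace.norm_eq, Finset.sum_apply]

theorem EuclideanSpace.inner_single_one_sum_single_one (S : Finset ι) (j : ι) :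
    ⟪EuclideanSpace.single j (1 : ℝ), ∑ i ∈ S, EuclideanSpace.single i (1 : ℝ)⟫ =
      if j ∈ S then 1 else 0 := by
  simp [EuclideanSpace.inner_single_left, Finset.sum_apply]

end IndicatorVector

theorem gap_preserved_general (k d m : ℕ) (hk : 0 < k)
    (ε : ℝ) (hε : ε = 1 / (16 * Real.sqrt k))
    (S : Finset (Fin d)) (hS : S.card = k)
    (yS : EuclideanSpace ℝ (Fin d))
    (hyS : yS = (1 / Real.sqrt k) • ∑ j ∈ S, EuclideanSpace.single j (1 : ℝ))
    (P : Set (EuclideanSpace ℝ (Fin d)))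
    (hP : P = insert 0 (insert yS
      (Set.range fun j : Fin d => EuclideanSpace.single j (1 : ℝ))))
    (f : EuclideanSpace ℝ (Fin d) → EuclideanSpace ℝ (Fin m)) (hf0 : f 0 = 0)
    (hf : ∀ x ∈ P, ∀ y ∈ P,
      (1 - ε) * ‖x - y‖ ^ 2 ≤ ‖f x - f y‖ ^ 2 ∧
        ‖f x - f y‖ ^ 2 ≤ (1 + ε) * ‖x - y‖ ^ 2) :
    ∀ j : Fin d,
      (j ∈ S → 12 * ε ≤ ⟪f (EuclideanSpace.single j (1 : ℝ)), f yS⟫) ∧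
        (j ∉ S → ⟪f (EuclideanSpace.single j (1 : ℝ)), f yS⟫ ≤ 4 * ε) := by
  intro j
  have hsqrt : 0 < √(k : ℝ) := Real.sqrt_pos.mpr (Nat.cast_pos.mpr hk)
  have hε0 : 0 < ε := by rw [hε]; positivity
  have hyS1 : ‖yS‖ = 1 := by
    rw [hyS, norm_smul, EuclideanSpace.norm_sum_single_one, hS,
      Real.norm_of_nonneg (by positivity), one_div_mul_cancel hsqrt.ne']
  have hinner : ⟪EuclideanSpace.single j (1 : ℝ), yS⟫ = if j ∈ S then 16 * ε else 0 := by
    rw [hyS, inner_smul_right, EuclideanSpace.inner_single_one_sum_single_one, hε]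
    split_ifs
    · field_simp
    · rw [mul_zero]
  have hgap := abs_inner_map_sub_inner_le_of_norm_eq_one (x := EuclideanSpace.single j 1)
    hf0 hf (by simp [hP]) (by simp [hP]) (by simp [hP]) (by simp) hyS1
  rw [hinner, abs_le] at hgap
  constructor
  · intro hj
    rw [if_pos hj] at hgap
    nlinarith [hgap.1]
  · intro hj
    rw [if_neg hj] at hgap
    linarith [hgap.2]

/-- Gap preservation: with `ε = 1/(16√k)`, `S ⊆ {1,…,d}` of size `k`, and
`y_S = (1/√k) Σ_{j ∈ S} e_j`, any map `f` with `f 0 = 0` preserving squared pairwise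
distances of `{0, e_1, …, e_d, y_S}` up to relative error `ε` satisfies
`⟨f(e_j), f(y_S)⟩ ≥ 12ε` for `j ∈ S` and `⟨f(e_j), f(y_S)⟩ ≤ 4ε` for `j ∉ S`. -/
theorem gap_preserved (k d m : ℕ) (hk : 0 < k) (hd : k ≤ d)
    (ε : ℝ) (hε : ε = 1 / (16 * Real.sqrt k))
    (S : Finset (Fin d)) (hS : S.card = k)
    (yS : EuclideanSpace ℝ (Fin d))
    (hyS : yS = (1 / Real.sqrt k) • ∑ j ∈ S, EuclideanSpace.single j (1 : ℝ))
    (P : Set (EuclideanSpace ℝ (Fin d)))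
    (hP : P = insert 0 (insert yS
      (Set.range fun j : Fin d => EuclideanSpace.single j (1 : ℝ))))
    (f : EuclideanSpace ℝ (Fin d) → EuclideanSpace ℝ (Fin m)) (hf0 : f 0 = 0)
    (hf : ∀ x ∈ P, ∀ y ∈ P,
      (1 - ε) * ‖x - y‖ ^ 2 ≤ ‖f x - f y‖ ^ 2 ∧
        ‖f x - f y‖ ^ 2 ≤ (1 + ε) * ‖x - y‖ ^ 2) :
    ∀ j : Fin d,
      (j ∈ S → 12 * ε ≤ ⟪f (EuclideanSpace.single j (1 : ℝ)), f yS⟫) ∧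
        (j ∉ S → ⟪f (EuclideanSpace.single j (1 : ℝ)), f yS⟫ ≤ 4 * ε) :=
  gap_preserved_general k d m hk ε hε S hS yS hyS P hP f hf0 hf
end
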